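/- arXiv:2106.05363 — 5 statements merged into one kernel-verified Lean document; each statement's English description precedes it below -/
import Mathlib

section
/- Let P = {p_1, ..., p_n} ⊆ ℝ where p_i = 2^{i+1} - 1. If C_1, C_2 ⊆ P are nonempty and 1-separated, meaning dist(C_1, C_2) ≥ max(diam(C_1), diam(C_2)), then min(|C_1|, |C_2|) = 1. -/
/-!
If both clusters had two points, let `b` be the largest point of the cluster with the smaller
maximum, and `c < d` the two largest points of the other cluster. Separation forces
`b < c < d` and `d - c ≤ diam ≤ c - b`. Along `2^(i+1) - 1` every gap is larger than the sum of
all gaps before it, so `c - b < d - c`.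
-/

open Metric

/-- The paper's notion of two clusters being `1`-separated. -/
def OneSeparated {α : Type*} [PseudoMetricSpace α] (C₁ C₂ : Finset α) : Prop :=
  ∀ p ∈ C₁, ∀ q ∈ C₂, max (diam (↑C₁ : Set α)) (diam (↑C₂ : Set α)) ≤ dist p q

def HasIncreasingGaps (S : Set ℝ) : Prop :=
  ∀ b ∈ S, ∀ c ∈ S, ∀ d ∈ S, b < c → c < d → c - b < d - c

theorem hasIncreasingGaps_range_two_pow_succ_sub_one :
    HasIncreasingGaps (Set.range fun i : ℕ => (2 : ℝ) ^ (i + 1) - 1) := by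
  rintro _ ⟨β, rfl⟩ _ ⟨γ, rfl⟩ _ ⟨δ, rfl⟩ - hcd
  have hγδ : γ < δ := by
    have := (pow_lt_pow_iff_right₀ (M₀ := ℝ) one_lt_two).mp (sub_lt_sub_iff_right 1 |>.mp hcd)
    omega
  have hδ : (2 : ℝ) ^ (γ + 2) ≤ 2 ^ (δ + 1) := pow_le_pow_right₀ one_le_two (by omega)
  have hβ : (0 : ℝ) < 2 ^ (β + 1) := by positivity
  rw [pow_succ _ (γ + 1)] at hδ
  linarith

namespace OneSeparated

variable {α : Type*} [PseudoMetricSpace α] {C₁ C₂ : Finset α}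

theorem symm (h : OneSeparated C₁ C₂) : OneSeparated C₂ C₁ := fun p hp q hq => by
  rw [max_comm, dist_comm]
  exact h q hq p hp

theorem dist_le_of_mem_left (h : OneSeparated C₁ C₂) {p q x y : α} (hp : p ∈ C₁) (hq : q ∈ C₂)
    (hx : x ∈ C₁) (hy : y ∈ C₁) : dist x y ≤ dist p q :=
  (dist_le_diam_of_mem C₁.finite_toSet.isBounded hx hy).trans
    ((le_max_left _ _).trans (h p hp q hq))

theorem dist_le_of_mem_right (h : OneSeparated C₁ C₂) {p q x y : α} (hp : p ∈ C₁) (hq : q ∈ C₂)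
    (hx : x ∈ C₂) (hy : y ∈ C₂) : dist x y ≤ dist p q :=
  (dist_le_diam_of_mem C₂.finite_toSet.isBounded hx hy).trans
    ((le_max_right _ _).trans (h p hp q hq))

end OneSeparated

theorem OneSeparated.ne_of_one_lt_card_left {α : Type*} [MetricSpace α] {C₁ C₂ : Finset α}
    (h : OneSeparated C₁ C₂) (hC₁ : 1 < C₁.card) {p q : α} (hp : p ∈ C₁) (hq : q ∈ C₂) : p ≠ q := by
  rintro rfl
  obtain ⟨x, hx, y, hy, hxy⟩ := Finset.one_lt_card.mp hC₁
  have := h.dist_le_of_mem_left hp hq hx hy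
  rw [dist_self] at this
  exact hxy (dist_le_zero.mp this)

theorem OneSeparated.max'_lt_of_mem_left {S : Set ℝ} (hS : HasIncreasingGaps S)
    {C₁ C₂ : Finset ℝ} (hS₁ : ↑C₁ ⊆ S) (hS₂ : ↑C₂ ⊆ S) (h : OneSeparated C₁ C₂)
    (hC₁ : 1 < C₁.card) (hC₂ : 1 < C₂.card) (hne₂ : C₂.Nonempty) {b : ℝ} (hb : b ∈ C₁) :
    C₂.max' hne₂ < b := by
  set d := C₂.max' hne₂
  have hd : d ∈ C₂ := C₂.max'_mem hne₂
  obtain ⟨c, hc, hcd⟩ := Finset.exists_mem_ne hC₂ d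
  have hcd : c < d := (C₂.le_max' c hc).lt_of_ne hcd
  by_contra! hbd
  have hbd : b < d := hbd.lt_of_ne (h.ne_of_one_lt_card_left hC₁ hb hd)
  have hgap_bd := h.dist_le_of_mem_right hb hd hc hd
  have hgap_bc := h.dist_le_of_mem_right hb hc hc hd
  rw [Real.dist_eq, Real.dist_eq, abs_of_neg (by linarith), abs_of_neg (by linarith)] at hgap_bd
  have hbc : b < c := (show b ≤ c by linarith).lt_of_ne (h.ne_of_one_lt_card_left hC₁ hb hc)
  rw [Real.dist_eq, Real.dist_eq, abs_of_neg (by linarith), abs_of_neg (sub_neg.mpr hbc)] at hgap_bc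
  have := hS b (hS₁ hb) c (hS₂ hc) d (hS₂ hd) hbc hcd
  linarith

/-- For the exponential point set `P = {2^{i+1}-1 : i = 1..n} ⊆ ℝ`,
any two nonempty 1-separated clusters `C₁, C₂ ⊆ P` (every pair of points from the
two clusters is at distance at least `max(diam C₁, diam C₂)`) satisfy
`min(|C₁|,|C₂|) = 1`. -/
theorem stmt0 (n : ℕ) (C₁ C₂ : Finset ℝ)
    (hP₁ : C₁ ⊆ (Finset.Icc 1 n).image (fun i : ℕ => (2:ℝ)^(i+1) - 1))
    (hP₂ : C₂ ⊆ (Finset.Icc 1 n).image (fun i : ℕ => (2:ℝ)^(i+1) - 1))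
    (h₁ : C₁.Nonempty) (h₂ : C₂.Nonempty)
    (hsep : ∀ p ∈ C₁, ∀ q ∈ C₂,
      max (Metric.diam (↑C₁ : Set ℝ)) (Metric.diam (↑C₂ : Set ℝ)) ≤ dist p q) :
    min C₁.card C₂.card = 1 := by
  have hP : ∀ C : Finset ℝ, C ⊆ (Finset.Icc 1 n).image (fun i : ℕ => (2:ℝ)^(i+1) - 1) →
      ↑C ⊆ Set.range fun i : ℕ => (2 : ℝ) ^ (i + 1) - 1 := fun C hC x hx => by
    obtain ⟨i, -, rfl⟩ := Finset.mem_image.mp (hC hx)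
    exact ⟨i, rfl⟩
  have hsep : OneSeparated C₁ C₂ := hsep
  by_contra hmin
  obtain ⟨hC₁, hC₂⟩ : 1 < C₁.card ∧ 1 < C₂.card := by
    have := h₁.card_pos
    have := h₂.card_pos
    omega
  have hS := hasIncreasingGaps_range_two_pow_succ_sub_one
  have h₂₁ := hsep.max'_lt_of_mem_left hS (hP _ hP₁) (hP _ hP₂) hC₁ hC₂ h₂ (C₁.max'_mem h₁)
  have h₁₂ := hsep.symm.max'_lt_of_mem_left hS (hP _ hP₂) (hP _ hP₁) hC₂ hC₁ h₁ (C₂.max'_mem h₂)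
  exact h₂₁.not_gt h₁₂
end

section
/- Let n ≥ 2 and define P_1 = {1, ..., n}, P_2 = {n+1, ..., 2n}, and P_3 = {1 + (1+i)n : i = 1, ..., n} as subsets of ℝ. For any C_1 ⊆ P_1, C_2 ⊆ P_2, C_3 ⊆ P_3 that are strongly 3-separated (dist(C_i, C_j) ≥ 3·max_ℓ diam(C_ℓ) for all i ≠ j), at least one C_i has |C_i| ≤ 1. -/
/-!
Two distinct points of `P₃` are at least `n` apart, so as soon as `C₃` has two points the
common scale `max_ℓ diam C_ℓ` is at least `n`. But any point of `P₁` lies within `2n - 1` of any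
point of `P₂`, which is less than `3n`; so `C₁` and `C₂` cannot both be nonempty.
-/

theorem Finset.le_diam_of_one_lt_card {α : Type*} [PseudoMetricSpace α] {s : Finset α} {r : ℝ}
    (hs : 1 < s.card) (hsep : ∀ x ∈ s, ∀ y ∈ s, x ≠ y → r ≤ dist x y) :
    r ≤ Metric.diam (s : Set α) := by
  obtain ⟨x, hx, y, hy, hxy⟩ := Finset.one_lt_card.mp hs
  exact (hsep x hx y hy hxy).trans (Metric.dist_le_diam_of_mem s.finite_toSet.isBounded hx hy)

theorem abs_le_dist_add_intCast_mul (a d : ℝ) {i j : ℤ} (hij : i ≠ j) :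
    |d| ≤ dist (a + i * d) (a + j * d) := by
  have hgap : (1 : ℝ) ≤ |(i : ℝ) - j| := by
    exact_mod_cast Int.one_le_abs (sub_ne_zero.mpr hij)
  calc |d| = 1 * |d| := (one_mul _).symm
    _ ≤ |(i : ℝ) - j| * |d| := by gcongr
    _ = dist (a + i * d) (a + j * d) := by rw [Real.dist_eq, ← abs_mul]; ring_nf

theorem dist_le_of_mem_Icc_of_mem_Icc {n a b : ℝ} (ha : a ∈ Set.Icc 1 n) (hb : b ∈ Set.Icc 1 n) :
    dist a (n + b) ≤ 2 * n - 1 := by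
  obtain ⟨ha₁, ha₂⟩ := ha
  obtain ⟨hb₁, hb₂⟩ := hb
  rw [Real.dist_eq, abs_le]
  constructor <;> linarith

theorem stmt6_general (n : ℕ) (C₁ C₂ C₃ : Finset ℝ)
    (h1 : ∀ x ∈ C₁, ∃ i : ℕ, 1 ≤ i ∧ i ≤ n ∧ x = (i : ℝ))
    (h2 : ∀ x ∈ C₂, ∃ i : ℕ, 1 ≤ i ∧ i ≤ n ∧ x = (n : ℝ) + i)
    (h3 : ∀ x ∈ C₃, ∃ i : ℕ, 1 ≤ i ∧ i ≤ n ∧ x = 1 + (1 + (i:ℝ)) * n)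
    (hsep12 : ∀ p ∈ C₁, ∀ q ∈ C₂,
      3 * max (Metric.diam (↑C₁ : Set ℝ))
        (max (Metric.diam (↑C₂ : Set ℝ)) (Metric.diam (↑C₃ : Set ℝ))) ≤ dist p q) :
    C₁.card ≤ 1 ∨ C₂.card ≤ 1 ∨ C₃.card ≤ 1 := by
  by_contra! ⟨hc₁, hc₂, hc₃⟩
  have hdiam₃ : (n : ℝ) ≤ Metric.diam (C₃ : Set ℝ) := by
    refine Finset.le_diam_of_one_lt_card hc₃ fun x hx y hy hxy => ?_
    obtain ⟨i, -, -, rfl⟩ := h3 x hx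
    obtain ⟨j, -, -, rfl⟩ := h3 y hy
    have hij : (i : ℤ) ≠ j := by rintro h; exact hxy (by norm_cast at h; rw [h])
    have := abs_le_dist_add_intCast_mul (1 + n) n hij
    rw [Nat.abs_cast] at this
    convert this using 2 <;> push_cast <;> ring
  obtain ⟨p, hp⟩ := Finset.card_pos.mp (by omega : 0 < C₁.card)
  obtain ⟨q, hq⟩ := Finset.card_pos.mp (by omega : 0 < C₂.card)
  have hpq : dist p q ≤ 2 * n - 1 := by
    obtain ⟨a, ha₁, ha₂, rfl⟩ := h1 p hp
    obtain ⟨b, hb₁, hb₂, rfl⟩ := h2 q hq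
    exact dist_le_of_mem_Icc_of_mem_Icc ⟨by exact_mod_cast ha₁, by exact_mod_cast ha₂⟩
      ⟨by exact_mod_cast hb₁, by exact_mod_cast hb₂⟩
  have hscale : (n : ℝ) ≤ max (Metric.diam (C₁ : Set ℝ))
      (max (Metric.diam (C₂ : Set ℝ)) (Metric.diam (C₃ : Set ℝ))) :=
    le_max_of_le_right (le_max_of_le_right hdiam₃)
  have := hsep12 p hp q hq
  linarith [n.cast_nonneg (α := ℝ)]

/-- For `P₁ = {1,...,n}`, `P₂ = {n+1,...,2n}`,
`P₃ = {1+(1+i)n : i = 1..n}` in `ℝ` and any `C₁ ⊆ P₁`, `C₂ ⊆ P₂`, `C₃ ⊆ P₃`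
that are strongly 3-separated, at least one `C_i` has at most one point. -/
theorem stmt6 (n : ℕ) (hn : 2 ≤ n) (C₁ C₂ C₃ : Finset ℝ)
    (h1 : ∀ x ∈ C₁, ∃ i : ℕ, 1 ≤ i ∧ i ≤ n ∧ x = (i : ℝ))
    (h2 : ∀ x ∈ C₂, ∃ i : ℕ, 1 ≤ i ∧ i ≤ n ∧ x = (n : ℝ) + i)
    (h3 : ∀ x ∈ C₃, ∃ i : ℕ, 1 ≤ i ∧ i ≤ n ∧ x = 1 + (1 + (i:ℝ)) * n)
    (hsep12 : ∀ p ∈ C₁, ∀ q ∈ C₂,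
      3 * max (Metric.diam (↑C₁ : Set ℝ))
        (max (Metric.diam (↑C₂ : Set ℝ)) (Metric.diam (↑C₃ : Set ℝ))) ≤ dist p q)
    (hsep13 : ∀ p ∈ C₁, ∀ q ∈ C₃,
      3 * max (Metric.diam (↑C₁ : Set ℝ))
        (max (Metric.diam (↑C₂ : Set ℝ)) (Metric.diam (↑C₃ : Set ℝ))) ≤ dist p q)
    (hsep23 : ∀ p ∈ C₂, ∀ q ∈ C₃,
      3 * max (Metric.diam (↑C₁ : Set ℝ))
        (max (Metric.diam (↑C₂ : Set ℝ)) (Metric.diam (↑C₃ : Set ℝ))) ≤ dist p q) :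
    C₁.card ≤ 1 ∨ C₂.card ≤ 1 ∨ C₃.card ≤ 1 :=
  stmt6_general n C₁ C₂ C₃ h1 h2 h3 hsep12
end

section
/- Let r > 0 and let B_1, ..., B_m be Euclidean balls in ℝ^d, each with radius in the interval [r/8, 8r], all containing a common point a ∈ ℝ^d, chosen from an underlying point set from which points are removed as balls are chosen, such that the sets of γ points extracted from them are pairwise disjoint, and suppose no ball of radius r/16 contains γ of the points available at the start; then m ≤ (c√d)^d for an absolute constant c. -/
/-- If `B₁,...,B_m` are balls of radius in `[r/8, 8r]`, all
containing a common point `a`, such that the sets of `γ` points extracted from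
them are pairwise disjoint subsets of a point set `P`, and no ball of radius
`r/16` contains `γ` points of `P`, then `m ≤ (c√d)^d` for an absolute
constant `c`. -/
theorem stmt10 : ∃ c : ℝ, 0 < c ∧ ∀ (d : ℕ) (r : ℝ) (γ m : ℕ), 0 < r → 1 ≤ γ →
    ∀ (x : Fin m → EuclideanSpace ℝ (Fin d)) (ρ : Fin m → ℝ)
      (S : Fin m → Finset (EuclideanSpace ℝ (Fin d)))
      (P : Finset (EuclideanSpace ℝ (Fin d)))
      (a : EuclideanSpace ℝ (Fin d)),
    (∀ i, r/8 ≤ ρ i ∧ ρ i ≤ 8*r) →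
    (∀ i, dist a (x i) ≤ ρ i) →
    (∀ i j, i ≠ j → Disjoint (S i) (S j)) →
    (∀ i, S i ⊆ P) →
    (∀ i, (S i).card = γ) →
    (∀ i, ∀ p ∈ S i, dist p (x i) ≤ ρ i) →
    (∀ y : EuclideanSpace ℝ (Fin d), (P.filter (fun p => dist p y ≤ r/16)).card < γ) →
    (m : ℝ) ≤ (c * Real.sqrt d)^d := by
  classical
  refine ⟨514, by norm_num, ?_⟩
  intro d r γ m hr hγ x ρ S P a hρ hax hdisj hSP hcard hSball hno
  rcases Nat.eq_zero_or_pos d with hd0 | hd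
  · -- dimension 0: the space is a single point, so m ≤ 1
    subst hd0
    have hm : m ≤ 1 := by
      by_contra hm
      push_neg at hm
      have h2 : 2 ≤ m := hm
      have hne : (⟨0, by omega⟩ : Fin m) ≠ ⟨1, by omega⟩ := by
        simp [Fin.ext_iff]
      have h0 : (S ⟨0, by omega⟩).Nonempty := by
        rw [← Finset.card_pos, hcard]; omega
      have h1 : (S ⟨1, by omega⟩).Nonempty := by
        rw [← Finset.card_pos, hcard]; omega
      obtain ⟨p, hp⟩ := h0
      obtain ⟨q, hq⟩ := h1
      have hpq : p = q := by
        ext i; exact i.elim0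
      exact Finset.disjoint_left.mp (hdisj _ _ hne) hp (hpq ▸ hq)
    simp only [pow_zero]
    exact_mod_cast hm
  · -- main case d ≥ 1 : grid argument
    have hdR : (0:ℝ) < d := by exact_mod_cast hd
    have h1d : 1 ≤ Real.sqrt d := by
      rw [show (1:ℝ) = Real.sqrt 1 by simp]
      exact Real.sqrt_le_sqrt (by exact_mod_cast hd)
    have hsd : (0:ℝ) < Real.sqrt d := by linarith
    set s : ℝ := r / (16 * Real.sqrt d) with hs_def
    have hs : 0 < s := by positivity
    set f : EuclideanSpace ℝ (Fin d) → (Fin d → ℤ) :=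
      fun p j => ⌊p j / s⌋ with hf_def
    set T : Finset (EuclideanSpace ℝ (Fin d)) := Finset.univ.biUnion S with hT_def
    have hTcard : T.card = m * γ := by
      rw [hT_def, Finset.card_biUnion (fun i _ j _ hij => hdisj i j hij)]
      simp [hcard, Finset.sum_const, Finset.card_univ, mul_comm]
    have hTP : ∀ p ∈ T, p ∈ P := by
      intro p hp
      obtain ⟨i, _, hpi⟩ := Finset.mem_biUnion.mp hp
      exact hSP i hpi
    have hTa : ∀ p ∈ T, dist p a ≤ 16 * r := by
      intro p hp
      obtain ⟨i, _, hpi⟩ := Finset.mem_biUnion.mp hp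
      have h1 := hSball i p hpi
      have h2 := hax i
      have h3 := (hρ i).2
      calc dist p a ≤ dist p (x i) + dist (x i) a := dist_triangle _ _ _
        _ = dist p (x i) + dist a (x i) := by rw [dist_comm (x i) a]
        _ ≤ 16 * r := by linarith
    -- coordinate distance is at most Euclidean distance
    have hcoord : ∀ (p q : EuclideanSpace ℝ (Fin d)) (j : Fin d),
        |p j - q j| ≤ dist p q := by
      intro p q j
      rw [EuclideanSpace.dist_eq]
      have h1 : |p j - q j| ^ 2 ≤ ∑ i, dist (p i) (q i) ^ 2 := by
        have := Finset.single_le_sum (f := fun i => dist (p i) (q i) ^ 2)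
          (fun i _ => sq_nonneg _) (Finset.mem_univ j)
        simpa [Real.dist_eq, sq_abs] using this
      calc |p j - q j| = Real.sqrt (|p j - q j| ^ 2) := by
            rw [Real.sqrt_sq_eq_abs, abs_abs]
        _ ≤ _ := Real.sqrt_le_sqrt h1
    -- points in the same grid cell are within r/16 of each other
    have hsamecell : ∀ p q : EuclideanSpace ℝ (Fin d), f p = f q →
        dist p q ≤ r / 16 := by
      intro p q h
      have hcoordlt : ∀ j : Fin d, dist (p j) (q j) ≤ s := by
        intro j
        have hfloor : ⌊p j / s⌋ = ⌊q j / s⌋ := congrFun h j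
        have a1 : ((⌊q j / s⌋ : ℤ) : ℝ) ≤ q j / s := Int.floor_le _
        have a2 : p j / s < (⌊p j / s⌋ : ℤ) + 1 := Int.lt_floor_add_one _
        have b1 : ((⌊p j / s⌋ : ℤ) : ℝ) ≤ p j / s := Int.floor_le _
        have b2 : q j / s < (⌊q j / s⌋ : ℤ) + 1 := Int.lt_floor_add_one _
        rw [hfloor] at a2 b1
        have h1 : (p j - q j) / s < 1 := by rw [sub_div]; linarith
        have h2 : (q j - p j) / s < 1 := by rw [sub_div]; linarith
        have h1' : p j - q j < s := (div_lt_one hs).mp h1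
        have h2' : q j - p j < s := (div_lt_one hs).mp h2
        rw [Real.dist_eq]
        exact le_of_lt (abs_sub_lt_iff.mpr ⟨h1', h2'⟩)
      rw [EuclideanSpace.dist_eq]
      have hsum : ∑ j, dist (p j) (q j) ^ 2 ≤ (d : ℝ) * s ^ 2 := by
        calc ∑ j, dist (p j) (q j) ^ 2 ≤ ∑ _j : Fin d, s ^ 2 :=
              Finset.sum_le_sum (fun j _ => by
                have h1 := hcoordlt j
                have h2 : (0:ℝ) ≤ dist (p j) (q j) := dist_nonneg
                nlinarith)
          _ = (d : ℝ) * s ^ 2 := by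
              simp [Finset.sum_const, Finset.card_univ, nsmul_eq_mul]
      calc Real.sqrt (∑ j, dist (p j) (q j) ^ 2) ≤ Real.sqrt ((d:ℝ) * s ^ 2) :=
            Real.sqrt_le_sqrt hsum
        _ = Real.sqrt d * s := by
            rw [Real.sqrt_mul (le_of_lt hdR), Real.sqrt_sq hs.le]
        _ = r / 16 := by
            rw [hs_def]
            field_simp
    -- each grid cell contains at most γ - 1 points of T
    have hfiber : ∀ b ∈ T.image f, (T.filter (fun p => f p = b)).card ≤ γ - 1 := by
      intro b hb
      obtain ⟨y, hy, hfy⟩ := Finset.mem_image.mp hb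
      have hsub : T.filter (fun p => f p = b) ⊆
          P.filter (fun p => dist p y ≤ r / 16) := by
        intro q hq
        rw [Finset.mem_filter] at hq ⊢
        exact ⟨hTP q hq.1, hsamecell q y (by rw [hq.2, hfy])⟩
      have h1 := Finset.card_le_card hsub
      have h2 := hno y
      omega
    have hTle : T.card ≤ (γ - 1) * (T.image f).card :=
      Finset.card_le_mul_card_image T (γ - 1) hfiber
    have hmN : m ≤ (T.image f).card := by
      have h1 : m * γ ≤ (γ - 1) * (T.image f).card := hTcard ▸ hTle
      have h2 : (γ - 1) * (T.image f).card ≤ γ * (T.image f).card :=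
        Nat.mul_le_mul_right _ (Nat.sub_le γ 1)
      have h3 : γ * m ≤ γ * (T.image f).card := by
        rw [mul_comm γ m]; omega
      exact Nat.le_of_mul_le_mul_left h3 (by omega)
    -- the number of grid cells is at most (514 √d)^d
    set lo : Fin d → ℤ := fun j => ⌊(a j - 16 * r) / s⌋ with hlo_def
    set hi : Fin d → ℤ := fun j => ⌊(a j + 16 * r) / s⌋ with hhi_def
    have himg : T.image f ⊆ Fintype.piFinset (fun j => Finset.Icc (lo j) (hi j)) := by
      intro b hb
      obtain ⟨p, hp, rfl⟩ := Finset.mem_image.mp hb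
      rw [Fintype.mem_piFinset]
      intro j
      rw [Finset.mem_Icc]
      have h16 : |p j - a j| ≤ 16 * r := le_trans (hcoord p a j) (hTa p hp)
      have habs := abs_le.mp h16
      constructor
      · apply Int.floor_le_floor
        rw [div_le_div_iff_of_pos_right hs]
        linarith [habs.1]
      · apply Int.floor_le_floor
        rw [div_le_div_iff_of_pos_right hs]
        linarith [habs.2]
    have h3 : ∀ j : Fin d, ((Finset.Icc (lo j) (hi j)).card : ℝ) ≤ 514 * Real.sqrt d := by
      intro j
      rw [Int.card_Icc]
      have e1 : ((hi j : ℤ) : ℝ) ≤ (a j + 16 * r) / s := Int.floor_le _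
      have e2 : (a j - 16 * r) / s - 1 < ((lo j : ℤ) : ℝ) := by
        have := Int.lt_floor_add_one ((a j - 16 * r) / s)
        rw [hlo_def]
        push_cast
        linarith
      have e3 : (a j + 16 * r) / s - (a j - 16 * r) / s = 512 * Real.sqrt d := by
        rw [hs_def, div_sub_div_same]
        have : a j + 16 * r - (a j - 16 * r) = 32 * r := by ring
        rw [this]
        field_simp
        ring
      rcases le_or_gt (hi j + 1 - lo j) 0 with hneg | hpos
      · rw [Int.toNat_of_nonpos hneg]
        simp only [Nat.cast_zero]
        positivity
      · have hc : (((hi j + 1 - lo j).toNat : ℕ) : ℝ) = ((hi j + 1 - lo j : ℤ) : ℝ) := by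
          exact_mod_cast congrArg (fun z : ℤ => (z : ℝ)) (Int.toNat_of_nonneg hpos.le)
        rw [hc]
        push_cast
        have : ((hi j : ℤ) : ℝ) + 1 - ((lo j : ℤ) : ℝ) ≤ 512 * Real.sqrt d + 2 := by
          linarith
        linarith [h1d]
    have hN : ((T.image f).card : ℝ) ≤ (514 * Real.sqrt d) ^ d := by
      have h1 : (T.image f).card ≤
          (Fintype.piFinset (fun j => Finset.Icc (lo j) (hi j))).card :=
        Finset.card_le_card himg
      have h2 : (Fintype.piFinset (fun j => Finset.Icc (lo j) (hi j))).card
          = ∏ j, (Finset.Icc (lo j) (hi j)).card := Fintype.card_piFinset _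
      calc ((T.image f).card : ℝ)
          ≤ ((Fintype.piFinset (fun j => Finset.Icc (lo j) (hi j))).card : ℝ) :=
            Nat.cast_le.mpr h1
        _ = ∏ j, ((Finset.Icc (lo j) (hi j)).card : ℝ) := by
            rw [h2]; push_cast; rfl
        _ ≤ ∏ _j : Fin d, (514 * Real.sqrt d) :=
            Finset.prod_le_prod (fun j _ => Nat.cast_nonneg _) (fun j _ => h3 j)
        _ = (514 * Real.sqrt d) ^ d := by
            simp [Finset.prod_const, Finset.card_univ]
    exact le_trans (Nat.cast_le.mpr hmN) hN
end

section
/- Let P ⊆ ℝ^d be a set of n points, and k ≥ 1, σ ≥ 1. Then there exist k pairwise disjoint subsets C_1, ..., C_k ⊆ P, each of size at least ⌈c(d)·n/(k σ^d)⌉ for a suitable constant c(d) > 0 depending only on d, such that for all i < j: dist(C_i, C_j) ≥ σ·diam(C_i); in particular the collection is semi σ-separated. -/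
/-!
Greedy extraction. Given `Q` and a target size `s`, let `r` be the least radius for which some
ball `B(p, r)` holds `s` points of `Q`. Output `C = Q ∩ B(p, r)` and delete `D = Q ∩ B(p, (2σ+2)r)`:
every surviving point is at distance `> (2σ+1)r ≥ σ · diam C` from `C`. By minimality of `r`, every
ball of radius `r/2` centred in `Q` holds fewer than `s` points; covering `D` by such balls around
a maximal `r/2`-separated subset, whose size is at most `(8σ+9)^d` by a volume comparison, gives
`|D| ≤ (17σ)^d s`. With `s = ⌈c n/(kσ^d)⌉` and `c = 1/(2·17^d)`, the `k` rounds delete at most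
`k (17σ)^d s ≤ n` points.
-/

open Metric MeasureTheory Finset Module

theorem Fin.forall_lt_cons_iff {α : Type*} {n : ℕ} {R : α → α → Prop} {a : α} {f : Fin n → α} :
    (∀ i j : Fin (n + 1), i < j →
        R (Fin.cons (α := fun _ => α) a f i) (Fin.cons (α := fun _ => α) a f j)) ↔
      (∀ j, R a (f j)) ∧ ∀ i j, i < j → R (f i) (f j) := by
  simp [Fin.forall_fin_succ, Fin.succ_pos]

section MetricSpace

variable {X : Type*} [MetricSpace X]

theorem Finset.exists_subset_pairwise_lt_dist_covering (S : Finset X) {δ : ℝ} (hδ : 0 ≤ δ) :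
    ∃ T ⊆ S, (T : Set X).Pairwise (δ < dist · ·) ∧ ∀ q ∈ S, ∃ t ∈ T, dist q t ≤ δ := by
  classical
  set separated := S.powerset.filter fun T : Finset X => (T : Set X).Pairwise (δ < dist · ·)
  obtain ⟨T, hT, hmax⟩ := exists_max_image separated card ⟨∅, by simp [separated]⟩
  rw [mem_filter, mem_powerset] at hT
  refine ⟨T, hT.1, hT.2, fun q hq => ?_⟩
  by_contra! hfar
  have hqT : q ∉ T := fun h => (hfar q h).not_ge (by rwa [dist_self])
  have hins : insert q T ∈ separated := by
    rw [mem_filter, mem_powerset, coe_insert, Set.pairwise_insert]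
    exact ⟨insert_subset hq hT.1, hT.2, fun t ht _ => ⟨hfar t ht, dist_comm q t ▸ hfar t ht⟩⟩
  have := hmax _ hins
  rw [card_insert_of_notMem hqT] at this
  omega

theorem Finset.exists_min_radius_le_card {Q : Finset X} {s : ℕ} (hs : 0 < s) (hsQ : s ≤ #Q) :
    ∃ p ∈ Q, ∃ r, 0 ≤ r ∧ s ≤ #{x ∈ Q | dist x p ≤ r} ∧
      ∀ q ∈ Q, ∀ ρ < r, #{x ∈ Q | dist x q ≤ ρ} < s := by
  classical
  -- the least such radius is a distance `dist x q` between two points of `Q`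
  set K := {qx ∈ Q ×ˢ Q | s ≤ #{y ∈ Q | dist y qx.1 ≤ dist qx.2 qx.1}}
  have farthest : ∀ q ∈ Q, ∀ ρ, s ≤ #{x ∈ Q | dist x q ≤ ρ} → ∃ x, dist x q ≤ ρ ∧ (q, x) ∈ K := by
    intro q hq ρ hρ
    obtain ⟨x, hx, hxmax⟩ :=
      exists_max_image {x ∈ Q | dist x q ≤ ρ} (dist · q) (card_pos.1 (hs.trans_le hρ))
    rw [mem_filter] at hx
    refine ⟨x, hx.2, mem_filter.2 ⟨mem_product.2 ⟨hq, hx.1⟩, hρ.trans (card_le_card ?_)⟩⟩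
    intro y hy
    exact mem_filter.2 ⟨(mem_filter.1 hy).1, hxmax y hy⟩
  obtain ⟨q₀, hq₀⟩ := card_pos.1 (hs.trans_le hsQ)
  obtain ⟨ρ₀, hρ₀⟩ := (isBounded_iff_subset_closedBall q₀).1 Q.finite_toSet.isBounded
  obtain ⟨x₀, -, hx₀⟩ := farthest q₀ hq₀ ρ₀ (by
    rwa [filter_true_of_mem fun x hx => mem_closedBall.1 (hρ₀ hx)])
  obtain ⟨⟨p, x⟩, hK, hmin⟩ := exists_min_image K (fun qx => dist qx.2 qx.1) ⟨_, hx₀⟩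
  obtain ⟨hpx, hcount⟩ := mem_filter.1 hK
  refine ⟨p, (mem_product.1 hpx).1, dist x p, dist_nonneg, hcount, fun q hq ρ hρ => ?_⟩
  by_contra! hρs
  obtain ⟨y, hyρ, hy⟩ := farthest q hq ρ hρs
  exact (hmin _ hy).not_gt (hyρ.trans_lt hρ)

end MetricSpace

section FiniteDimensional

variable {E : Type*} [NormedAddCommGroup E] [NormedSpace ℝ E] [FiniteDimensional ℝ E]

theorem card_le_pow_of_pairwise_lt_dist {T : Finset E} {p : E} {δ R : ℝ} (hδ : 0 < δ)
    (hR : 0 ≤ R) (hT : ∀ t ∈ T, dist t p ≤ R) (hsep : (T : Set E).Pairwise (δ < dist · ·)) :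
    (#T : ℝ) ≤ (2 * R / δ + 1) ^ finrank ℝ E := by
  borelize E
  set μ : Measure E := Measure.addHaar
  have hdisj : (T : Set E).PairwiseDisjoint (ball · (δ / 2)) := fun s hs t ht hst =>
    ball_disjoint_ball (by linarith [hsep hs ht hst])
  have hsub : ∀ t ∈ T, ball t (δ / 2) ⊆ ball p (R + δ / 2) := fun t ht =>
    ball_subset_ball' (by linarith [hT t ht])
  have hvol : ∑ t ∈ T, μ (ball t (δ / 2)) ≤ μ (ball p (R + δ / 2)) := by
    rw [← measure_biUnion_finset hdisj fun _ _ => measurableSet_ball]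
    exact measure_mono (Set.iUnion₂_subset hsub)
  simp only [μ.addHaar_ball_of_pos _ (half_pos hδ),
    μ.addHaar_ball_of_pos _ (by positivity : 0 < R + δ / 2), sum_const, nsmul_eq_mul,
    ← mul_assoc] at hvol
  rw [ENNReal.mul_le_mul_iff_left (measure_ball_pos μ _ one_pos).ne' measure_ball_lt_top.ne,
    ← ENNReal.ofReal_natCast, ← ENNReal.ofReal_mul (by positivity),
    ENNReal.ofReal_le_ofReal_iff (by positivity)] at hvol
  calc (#T : ℝ) ≤ (R + δ / 2) ^ finrank ℝ E / (δ / 2) ^ finrank ℝ E := by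
        rwa [le_div_iff₀ (by positivity)]
    _ = _ := by rw [← div_pow]; congr 1; field_simp

theorem card_filter_dist_le_le_of_sparse {Q : Finset E} {δ R : ℝ} {s : ℕ} (p : E) (hδ : 0 < δ)
    (hR : 0 ≤ R) (hsparse : ∀ q ∈ Q, #{x ∈ Q | dist x q ≤ δ} < s) :
    (#{x ∈ Q | dist x p ≤ R} : ℝ) ≤ (2 * R / δ + 1) ^ finrank ℝ E * s := by
  classical
  set S := {x ∈ Q | dist x p ≤ R}
  obtain ⟨T, hTS, hTsep, hTcov⟩ := S.exists_subset_pairwise_lt_dist_covering hδ.le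
  have hST : #S ≤ #T * s := calc
    #S ≤ #(T.biUnion fun t => {x ∈ Q | dist x t ≤ δ}) := card_le_card fun q hq => by
      obtain ⟨t, ht, hqt⟩ := hTcov q hq
      exact mem_biUnion.2 ⟨t, ht, mem_filter.2 ⟨(mem_filter.1 hq).1, hqt⟩⟩
    _ ≤ ∑ t ∈ T, #{x ∈ Q | dist x t ≤ δ} := card_biUnion_le
    _ ≤ #T * s := sum_le_card_nsmul _ _ _ fun t ht => (hsparse t (mem_filter.1 (hTS ht)).1).le
  have hT : (#T : ℝ) ≤ (2 * R / δ + 1) ^ finrank ℝ E :=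
    card_le_pow_of_pairwise_lt_dist hδ hR (fun t ht => (mem_filter.1 (hTS ht)).2) hTsep
  calc (#S : ℝ) ≤ #T * s := by exact_mod_cast hST
    _ ≤ _ := by gcongr

theorem exists_cluster {Q : Finset E} {σ : ℝ} {s : ℕ} (hσ : 1 ≤ σ) (hs : 0 < s) (hsQ : s ≤ #Q) :
    ∃ C D, C ⊆ D ∧ D ⊆ Q ∧ s ≤ #C ∧ (#D : ℝ) ≤ (17 * σ) ^ finrank ℝ E * s ∧
      ∀ x ∈ C, ∀ q ∈ Q, q ∉ D → σ * diam (C : Set E) ≤ dist x q := by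
  obtain ⟨p, -, r, hr, hC, hmin⟩ := Q.exists_min_radius_le_card hs hsQ
  refine ⟨{x ∈ Q | dist x p ≤ r}, {x ∈ Q | dist x p ≤ (2 * σ + 2) * r}, ?_, filter_subset _ _,
    hC, ?_, ?_⟩
  · intro x hx
    rw [mem_filter] at hx ⊢
    exact ⟨hx.1, hx.2.trans (le_mul_of_one_le_left hr (by linarith))⟩
  · have hs17 : (s : ℝ) ≤ (17 * σ) ^ finrank ℝ E * s :=
      le_mul_of_one_le_left (Nat.cast_nonneg s) (one_le_pow₀ (by linarith))
    rcases hr.eq_or_lt with rfl | hr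
    · have hD : {x ∈ Q | dist x p ≤ (2 * σ + 2) * 0} ⊆ {p} := fun x hx => by
        simpa using (mem_filter.1 hx).2
      exact le_trans (by exact_mod_cast (card_le_card hD).trans ((card_singleton p).trans_le hs))
        hs17
    · calc _ ≤ (2 * ((2 * σ + 2) * r) / (r / 2) + 1) ^ finrank ℝ E * s :=
            card_filter_dist_le_le_of_sparse p (half_pos hr) (by positivity)
              fun q hq => hmin q hq _ (half_lt_self hr)
        _ ≤ _ := by
          gcongr
          rw [show 2 * ((2 * σ + 2) * r) / (r / 2) = 8 * σ + 8 by field_simp; ring]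
          linarith
  · intro x hx q hq hqD
    have hfar : (2 * σ + 2) * r < dist q p := not_le.1 fun h => hqD (mem_filter.2 ⟨hq, h⟩)
    have hdiam : diam (({x ∈ Q | dist x p ≤ r} : Finset E) : Set E) ≤ 2 * r :=
      (diam_mono (fun y hy => mem_closedBall.2 (mem_filter.1 hy).2) isBounded_closedBall).trans
        (diam_closedBall hr)
    calc σ * diam _ ≤ σ * (2 * r) := by gcongr
      _ ≤ (2 * σ + 2) * r - r := by nlinarith
      _ ≤ dist q p - dist x p := by linarith [(mem_filter.1 hx).2]
      _ ≤ dist x q := by linarith [dist_triangle q x p, dist_comm x q]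

theorem exists_separated_clusters {σ : ℝ} {s : ℕ} (hσ : 1 ≤ σ) (hs : 0 < s) :
    ∀ (k : ℕ) (Q : Finset E), k * ((17 * σ) ^ finrank ℝ E * s) ≤ #Q →
      ∃ C : Fin k → Finset E, (∀ i, C i ⊆ Q) ∧ (∀ i, s ≤ #(C i)) ∧ ∀ i j, i < j →
        Disjoint (C i) (C j) ∧ ∀ p ∈ C i, ∀ q ∈ C j, σ * diam (C i : Set E) ≤ dist p q
  | 0, _, _ => ⟨Fin.elim0, nofun, nofun, nofun⟩
  | k + 1, Q, hQ => by
    classical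
    set M := (17 * σ) ^ finrank ℝ E * s
    have hsM : (s : ℝ) ≤ M :=
      le_mul_of_one_le_left (Nat.cast_nonneg s) (one_le_pow₀ (by linarith))
    obtain ⟨C₀, D, hC₀D, hDQ, hC₀, hD, hC₀sep⟩ := exists_cluster (Q := Q) hσ hs (by
      have : (s : ℝ) ≤ #Q := by push_cast at hQ; nlinarith [(Nat.cast_nonneg k : (0 : ℝ) ≤ k)]
      exact_mod_cast this)
    obtain ⟨C, hCQ, hC, hCsep⟩ := exists_separated_clusters hσ hs k (Q \ D) (by
      rw [card_sdiff_of_subset hDQ, Nat.cast_sub (card_le_card hDQ)]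
      push_cast at hQ
      linarith)
    refine ⟨Fin.cons C₀ C,
      Fin.forall_fin_succ.2 ⟨hC₀D.trans hDQ, fun i => (hCQ i).trans sdiff_subset⟩,
      Fin.forall_fin_succ.2 ⟨hC₀, hC⟩,
      (Fin.forall_lt_cons_iff (R := fun X Y : Finset E =>
        Disjoint X Y ∧ ∀ p ∈ X, ∀ q ∈ Y, σ * diam (X : Set E) ≤ dist p q)).2
        ⟨fun j => ⟨disjoint_sdiff.mono hC₀D (hCQ j), fun p hp q hq => ?_⟩, hCsep⟩⟩
    obtain ⟨hqQ, hqD⟩ := mem_sdiff.1 (hCQ j hq)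
    exact hC₀sep p hp q hqQ hqD

end FiniteDimensional

/-- For any `n`-point set `P ⊆ ℝ^d`, `k ≥ 1` and `σ ≥ 1` (with `n`
large enough that `c(d)·n/(kσ^d) ≥ 1`), there exist `k` pairwise disjoint
subsets `C₁,...,C_k ⊆ P`, each of size at least `⌈c(d)·n/(kσ^d)⌉`, such that
for all `i < j` every pair of points from `C_i` and `C_j` is at distance at
least `σ·diam(C_i)`; in particular the collection is semi `σ`-separated. -/
theorem stmt14 (d : ℕ) : ∃ c : ℝ, 0 < c ∧
    ∀ (P : Finset (EuclideanSpace ℝ (Fin d))) (k : ℕ) (σ : ℝ), 1 ≤ k → 1 ≤ σ →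
    1 ≤ c * P.card / (k * σ^d) →
    ∃ C : Fin k → Finset (EuclideanSpace ℝ (Fin d)),
      (∀ i, C i ⊆ P) ∧
      (∀ i j, i ≠ j → Disjoint (C i) (C j)) ∧
      (∀ i, ⌈c * P.card / (k * σ^d)⌉₊ ≤ (C i).card) ∧
      (∀ i j : Fin k, i < j → ∀ p ∈ C i, ∀ q ∈ C j,
        σ * Metric.diam (↑(C i) : Set (EuclideanSpace ℝ (Fin d))) ≤ dist p q) := by
  refine ⟨(2 * 17 ^ d)⁻¹, by positivity, fun P k σ hk hσ hm => ?_⟩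
  set m := (2 * 17 ^ d : ℝ)⁻¹ * #P / (k * σ ^ d)
  have hkP : k * ((17 * σ) ^ finrank ℝ (EuclideanSpace ℝ (Fin d)) * ⌈m⌉₊) ≤ #P := calc
    _ ≤ k * ((17 * σ) ^ d * (2 * m)) := by
      rw [finrank_euclideanSpace_fin]; gcongr; exact Nat.ceil_le_two_mul (by linarith)
    _ = #P := by simp only [m]; field_simp; ring
  obtain ⟨C, hCP, hC, hsep⟩ :=
    exists_separated_clusters hσ (Nat.one_le_ceil_iff.2 (by linarith)) k P hkP
  exact ⟨C, hCP, (pairwise_disjoint_on C).2 fun i j hij => (hsep i j hij).1, hC,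
    fun i j hij => (hsep i j hij).2⟩
end

section
/- Let P ⊆ ℝ^d be a finite set and suppose there exist m pairwise disjoint subsets S_1, ..., S_m ⊆ P, each of size at least α, each contained in a ball of radius at most 8r centered at a point c_i, such that for each i the number of indices j with ‖c_i - c_j‖ ≤ (8 + 2σ)·8r is at most D (including i itself). Then one can select at least m/D indices I such that for all distinct i, j ∈ I, dist(S_i, S_j) ≥ ‖c_i - c_j‖ - 16r ≥ 2σ·8r ≥ σ·max(diam S_i, diam S_j); i.e., {S_i}_{i∈I} is strongly σ-separated. -/
/-!
Call two clusters *close* when their centres are within `(8 + 2σ)·8r`. In a maximal family of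
pairwise non-close clusters every cluster is close to a selected one, and each selected cluster
is close to at most `D` clusters, so at least `m / D` clusters are selected. Two selected clusters
have centres more than `(8 + 2σ)·8r` apart and radii at most `8r`, so their points are at least
`16σr` apart, while every cluster has diameter at most `16r`.
-/

open Finset

theorem Finset.exists_pairwise_not_rel_card_le_mul {ι : Type*} [DecidableEq ι]
    (near : ι → ι → Prop) [DecidableRel near] (hsymm : ∀ i j, near i j → near j i)
    (hrefl : ∀ i, near i i)
    (A : Finset ι) {D : ℕ} (hD : ∀ i ∈ A, #{j ∈ A | near i j} ≤ D) :
    ∃ I ⊆ A, #A ≤ D * #I ∧ (I : Set ι).Pairwise fun i j ↦ ¬ near i j := by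
  classical
  set F : Finset (Finset ι) := {J ∈ A.powerset | (J : Set ι).Pairwise fun i j ↦ ¬ near i j}
  obtain ⟨I, hIF, hImax⟩ : ∃ I, Maximal (· ∈ F) I := Finset.exists_maximal ⟨∅, by simp [F]⟩
  obtain ⟨hIA, hIindep⟩ : I ⊆ A ∧ (I : Set ι).Pairwise fun i j ↦ ¬ near i j := by
    simpa [F] using hIF
  have hdom : A ⊆ I.biUnion fun i ↦ {j ∈ A | near i j} := by
    intro x hx
    simp only [mem_biUnion, mem_filter]
    by_cases hxI : x ∈ I
    · exact ⟨x, hxI, hx, hrefl x⟩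
    · by_contra! hfree
      have hins : insert x I ∈ F := by
        simp only [F, mem_filter, mem_powerset, insert_subset_iff, coe_insert]
        exact ⟨⟨hx, hIA⟩, hIindep.insert fun b hb _ ↦
          ⟨fun h ↦ hfree b hb hx (hsymm _ _ h), hfree b hb hx⟩⟩
      exact hxI (hImax hins (subset_insert x I) (mem_insert_self x I))
  refine ⟨I, hIA, ?_, hIindep⟩
  calc #A ≤ #(I.biUnion fun i ↦ {j ∈ A | near i j}) := card_le_card hdom
    _ ≤ ∑ i ∈ I, #{j ∈ A | near i j} := card_biUnion_le
    _ ≤ #I • D := sum_le_card_nsmul _ _ _ fun i hi ↦ hD i (hIA hi)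
    _ = D * #I := by rw [smul_eq_mul, mul_comm]

theorem stmt19_general (d m D : ℕ) (r σ : ℝ) (hr : 0 < r) (hσ : 1 ≤ σ)
    (c : Fin m → EuclideanSpace ℝ (Fin d))
    (S : Fin m → Finset (EuclideanSpace ℝ (Fin d)))
    (hball : ∀ i, ∀ p ∈ S i, dist p (c i) ≤ 8*r)
    (hD : ∀ i : Fin m,
      (Finset.univ.filter (fun j : Fin m => dist (c i) (c j) ≤ (8+2*σ)*(8*r))).card ≤ D) :
    ∃ I : Finset (Fin m), (m : ℝ) / D ≤ I.card ∧
      ∀ i ∈ I, ∀ j ∈ I, i ≠ j → ∀ p ∈ S i, ∀ q ∈ S j, ∀ l ∈ I,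
        σ * Metric.diam (↑(S l) : Set (EuclideanSpace ℝ (Fin d))) ≤ dist p q := by
  obtain ⟨I, -, hcard, hfar⟩ := Finset.exists_pairwise_not_rel_card_le_mul
    (fun i j ↦ dist (c i) (c j) ≤ (8 + 2 * σ) * (8 * r))
    (fun i j h ↦ by rwa [dist_comm] at h) (fun i ↦ by simp only [dist_self]; positivity)
    univ fun i _ ↦ hD i
  refine ⟨I, div_le_of_le_mul₀ (by positivity) (by positivity) ?_, ?_⟩
  · simpa [mul_comm] using (Nat.cast_le (α := ℝ)).2 hcard
  intro i hi j hj hij p hp q hq l _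
  have hdiam : Metric.diam (S l : Set (EuclideanSpace ℝ (Fin d))) ≤ 2 * (8 * r) :=
    Metric.diam_le_of_subset_closedBall (by positivity) fun x hx ↦ hball l x hx
  have hcentres : (8 + 2 * σ) * (8 * r) < dist (c i) (c j) := not_le.1 (hfar hi hj hij)
  have htri : dist (c i) (c j) ≤ dist (c i) p + dist p q + dist q (c j) := dist_triangle4 _ _ _ _
  rw [dist_comm (c i) p] at htri
  nlinarith [hball i p hp, hball j q hq, mul_le_mul_of_nonneg_left hdiam (by linarith : 0 ≤ σ)]

/-- Given `m` pairwise disjoint subsets `S_1,...,S_m ⊆ P`, each of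
size at least `α`, each contained in a ball of radius `8r` about its center
`c_i`, such that each center has at most `D` centers (itself included) within
distance `(8+2σ)·8r`, one can select at least `m/D` indices whose clusters are
strongly `σ`-separated: any pair of points from two distinct selected clusters
is at distance at least `σ·diam(S_ℓ)` for every selected `ℓ`. -/
theorem stmt19 (d m α D : ℕ) (r σ : ℝ) (hr : 0 < r) (hσ : 1 ≤ σ)
    (P : Finset (EuclideanSpace ℝ (Fin d)))
    (c : Fin m → EuclideanSpace ℝ (Fin d))
    (S : Fin m → Finset (EuclideanSpace ℝ (Fin d)))
    (hsub : ∀ i, S i ⊆ P)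
    (hdisj : ∀ i j, i ≠ j → Disjoint (S i) (S j))
    (hsize : ∀ i, α ≤ (S i).card)
    (hball : ∀ i, ∀ p ∈ S i, dist p (c i) ≤ 8*r)
    (hD : ∀ i : Fin m,
      (Finset.univ.filter (fun j : Fin m => dist (c i) (c j) ≤ (8+2*σ)*(8*r))).card ≤ D) :
    ∃ I : Finset (Fin m), (m : ℝ) / D ≤ I.card ∧
      ∀ i ∈ I, ∀ j ∈ I, i ≠ j → ∀ p ∈ S i, ∀ q ∈ S j, ∀ l ∈ I,
        σ * Metric.diam (↑(S l) : Set (EuclideanSpace ℝ (Fin d))) ≤ dist p q :=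
  stmt19_general d m D r σ hr hσ c S hball hD
end
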